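/- arXiv:1709.09253 — 4 statements merged into one kernel-verified Lean document; each statement's English description precedes it below -/
import Mathlib

section
/- (Odd Degree Evolution Equation, bounded-operator form.) Let H be a complex Hilbert space and L(H) its bounded linear operators, with † denoting the Hilbert-space adjoint. Let T > 0, let D₀ ∈ L(H), and let F : L(H) → L(H) be any map. Let P, Q : [0,T] → L(H) be differentiable in operator norm with ∂_t P(t) = D₀ P(t) and ∂_t Q(t) = F(P(t) P(t)†) Q(t) for all t ∈ [0,T]. Suppose that for every t ∈ [0,T] the operator Q(t) is invertible and satisfies Q(t) Q(t)† = id. Define G(t) := P(t) Q(t)⁻¹. Then P(t) P(t)† = G(t) G(t)† for all t, G is differentiable, and G satisfies ∂_t G(t) = D₀ G(t) − G(t) F(G(t) G(t)†) for all t ∈ [0,T]. -/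
/-!
A left inverse `Qinv` and a right inverse `Q†` of `Q` coincide, so `Q` is unitary and
`G G† = P Q† Q P† = P P†`. By the product rule and `(Q⁻¹)' = -Q⁻¹ Q' Q⁻¹`,
`G' = D₀ P Q⁻¹ - P Q⁻¹ F(P P†) Q Q⁻¹ = D₀ G - G F(G G†)`.
-/

open ContinuousLinearMap

section NormedRing

variable {𝕜 R : Type*} [NontriviallyNormedField 𝕜] [NormedRing R] [HasSummableGeomSeries R]
  [NormedAlgebra 𝕜 R] {Q Qinv : 𝕜 → R} {Q' : R} {s : Set 𝕜} {t : 𝕜}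

theorem HasDerivWithinAt.inverse_of_mul_eq_one (hQ : HasDerivWithinAt Q Q' s t)
    (hleft : ∀ r ∈ s, Qinv r * Q r = 1) (hright : ∀ r ∈ s, Q r * Qinv r = 1) (ht : t ∈ s) :
    HasDerivWithinAt Qinv (-(Qinv t * Q' * Qinv t)) s t := by
  have hring : ∀ r ∈ s, Ring.inverse (Q r) = Qinv r := fun r hr =>
    Ring.inverse_unit (⟨Q r, Qinv r, hright r hr, hleft r hr⟩ : Rˣ)
  have h := ((hasFDerivAt_ringInverse (𝕜 := 𝕜)
    ⟨Q t, Qinv t, hright t ht, hleft t ht⟩).comp_hasDerivWithinAt t hQ).congr_of_mem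
      (fun r hr => (hring r hr).symm) ht
  simpa only [Units.inv_mk, neg_apply, mulLeftRight_apply, mul_assoc] using h

theorem HasDerivWithinAt.mul_inverse_of_linear {P : 𝕜 → R} {D K : R}
    (hP : HasDerivWithinAt P (D * P t) s t) (hQ : HasDerivWithinAt Q (K * Q t) s t)
    (hleft : ∀ r ∈ s, Qinv r * Q r = 1) (hright : ∀ r ∈ s, Q r * Qinv r = 1) (ht : t ∈ s) :
    HasDerivWithinAt (fun r => P r * Qinv r) (D * (P t * Qinv t) - P t * Qinv t * K) s t := by
  have hG := hP.fun_mul (hQ.inverse_of_mul_eq_one hleft hright ht)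
  have hcancel : Qinv t * (K * Q t) * Qinv t = Qinv t * K := by
    rw [mul_assoc, mul_assoc, hright t ht, mul_one]
  rw [hcancel] at hG
  convert hG using 1
  noncomm_ring

end NormedRing

theorem mul_star_mul_star_mul_star {M : Type*} [Monoid M] [StarMul M] {q : M}
    (hq : star q * q = 1) (p : M) : p * star q * star (p * star q) = p * star p := by
  rw [star_mul, star_star, mul_assoc, ← mul_assoc (star q), hq, one_mul]

theorem odd_degree_evolution_equation_general
    {H : Type*} [NormedAddCommGroup H] [InnerProductSpace ℂ H] [CompleteSpace H]
    (T : ℝ)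
    (D₀ : H →L[ℂ] H) (F : (H →L[ℂ] H) → (H →L[ℂ] H))
    (P Q Qinv : ℝ → H →L[ℂ] H)
    (hP : ∀ t ∈ Set.Icc (0 : ℝ) T,
      HasDerivWithinAt P (D₀ ∘L P t) (Set.Icc (0 : ℝ) T) t)
    (hQ : ∀ t ∈ Set.Icc (0 : ℝ) T,
      HasDerivWithinAt Q (F (P t ∘L adjoint (P t)) ∘L Q t) (Set.Icc (0 : ℝ) T) t)
    (hQinv_left : ∀ t ∈ Set.Icc (0 : ℝ) T, Qinv t ∘L Q t = 1)
    (hunitary : ∀ t ∈ Set.Icc (0 : ℝ) T, Q t ∘L adjoint (Q t) = 1) :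
    (∀ t ∈ Set.Icc (0 : ℝ) T,
      P t ∘L adjoint (P t)
        = (P t ∘L Qinv t) ∘L adjoint (P t ∘L Qinv t)) ∧
    ∀ t ∈ Set.Icc (0 : ℝ) T,
      HasDerivWithinAt (fun s => P s ∘L Qinv s)
        (D₀ ∘L (P t ∘L Qinv t)
          - (P t ∘L Qinv t) ∘L F ((P t ∘L Qinv t) ∘L adjoint (P t ∘L Qinv t)))
        (Set.Icc (0 : ℝ) T) t := by
  have hQinv_eq : ∀ t ∈ Set.Icc (0 : ℝ) T, Qinv t = adjoint (Q t) := fun t ht =>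
    left_inv_eq_right_inv (hQinv_left t ht) (hunitary t ht)
  have hQ_isometry : ∀ t ∈ Set.Icc (0 : ℝ) T, star (Q t) * Q t = 1 := fun t ht => by
    rw [star_eq_adjoint, ← hQinv_eq t ht]; exact hQinv_left t ht
  have hGG : ∀ t ∈ Set.Icc (0 : ℝ) T,
      P t ∘L adjoint (P t) = (P t ∘L Qinv t) ∘L adjoint (P t ∘L Qinv t) := fun t ht => by
    rw [hQinv_eq t ht]; exact (mul_star_mul_star_mul_star (hQ_isometry t ht) (P t)).symm
  refine ⟨hGG, fun t ht => ?_⟩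
  rw [← hGG t ht]
  exact (hP t ht).mul_inverse_of_linear (hQ t ht) hQinv_left
    (fun r hr => by rw [hQinv_eq r hr]; exact hunitary r hr) ht

/-- **Odd Degree Evolution Equation (bounded-operator form).**
Let `H` be a complex Hilbert space, `T > 0`, `D₀ ∈ L(H)`, and `F : L(H) → L(H)` any map.
Let `P, Q : [0,T] → L(H)` be differentiable with `∂_t P = D₀ P` and
`∂_t Q = F(P P†) Q` on `[0,T]`. Suppose each `Q(t)` is invertible (with inverse `Qinv t`)
and satisfies `Q(t) Q(t)† = id`. Set `G(t) := P(t) Q(t)⁻¹`. Then `P P† = G G†` on `[0,T]`,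
`G` is differentiable, and `∂_t G = D₀ G − G F(G G†)` on `[0,T]`. -/
theorem odd_degree_evolution_equation
    {H : Type*} [NormedAddCommGroup H] [InnerProductSpace ℂ H] [CompleteSpace H]
    (T : ℝ) (hT : 0 < T)
    (D₀ : H →L[ℂ] H) (F : (H →L[ℂ] H) → (H →L[ℂ] H))
    (P Q Qinv : ℝ → H →L[ℂ] H)
    (hP : ∀ t ∈ Set.Icc (0 : ℝ) T,
      HasDerivWithinAt P (D₀ ∘L P t) (Set.Icc (0 : ℝ) T) t)
    (hQ : ∀ t ∈ Set.Icc (0 : ℝ) T,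
      HasDerivWithinAt Q (F (P t ∘L adjoint (P t)) ∘L Q t) (Set.Icc (0 : ℝ) T) t)
    (hQinv_left : ∀ t ∈ Set.Icc (0 : ℝ) T, Qinv t ∘L Q t = 1)
    (hQinv_right : ∀ t ∈ Set.Icc (0 : ℝ) T, Q t ∘L Qinv t = 1)
    (hunitary : ∀ t ∈ Set.Icc (0 : ℝ) T, Q t ∘L adjoint (Q t) = 1) :
    (∀ t ∈ Set.Icc (0 : ℝ) T,
      P t ∘L adjoint (P t)
        = (P t ∘L Qinv t) ∘L adjoint (P t ∘L Qinv t)) ∧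
    ∀ t ∈ Set.Icc (0 : ℝ) T,
      HasDerivWithinAt (fun s => P s ∘L Qinv s)
        (D₀ ∘L (P t ∘L Qinv t)
          - (P t ∘L Qinv t) ∘L F ((P t ∘L Qinv t) ∘L adjoint (P t ∘L Qinv t)))
        (Set.Icc (0 : ℝ) T) t :=
  odd_degree_evolution_equation_general T D₀ F P Q Qinv hP hQ hQinv_left hunitary
end

section
/- (Rank-one Riccati verification: nonlocal Fisher–Kolmogorov–Petrovskii–Piskunov-type equations.) Let T > 0, let d(X) = Σ_{j=0}^{N} d_j X^j be a polynomial with complex coefficients, and let b : ℝ → ℂ. Suppose p : ℝ × [0,T) → ℂ is smooth with ∂_t p(x;t) = Σ_{j=0}^N d_j ∂_x^j p(x;t) for all x and t, and for each t ∈ [0,T) the function z ↦ b(z) p(z;t) is integrable on ℝ. Suppose q̄ : [0,T) → ℂ is differentiable with q̄(t) ≠ 0 for all t ∈ [0,T) and q̄'(t) = ∫_ℝ b(z) p(z;t) dz. Then g(x;t) := p(x;t)/q̄(t) satisfies, for all x ∈ ℝ and t ∈ [0,T), the nonlocal nonlinear equation ∂_t g(x;t) = Σ_{j=0}^N d_j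 ∂_x^j g(x;t) − g(x;t) · ∫_ℝ b(z) g(z;t) dz. In particular, if q̄(0) = 1 then g(·;0) = p(·;0). -/
open MeasureTheory Finset

/- Write `g = p / q̄`. The quotient rule gives `∂_t g = ∂_t p / q̄ - g · q̄' / q̄`. Since `q̄(t)` does
not depend on `x`, the operator `d(∂_x)` commutes with division by it, so `∂_t p / q̄ = d(∂_x) g`;
and `q̄' / q̄ = ∫ b p / q̄ = ∫ b g`. -/

theorem HasDerivWithinAt.fun_div_sub_div_mul_div {𝕜 𝕜' : Type*} [NontriviallyNormedField 𝕜]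
    [NontriviallyNormedField 𝕜'] [NormedAlgebra 𝕜 𝕜'] {p q : 𝕜 → 𝕜'} {p' q' : 𝕜'}
    {s : Set 𝕜} {t : 𝕜} (hp : HasDerivWithinAt p p' s t) (hq : HasDerivWithinAt q q' s t)
    (hqt : q t ≠ 0) :
    HasDerivWithinAt (fun s => p s / q s) (p' / q t - p t / q t * (q' / q t)) s t := by
  convert hp.fun_div hq hqt using 1
  field_simp

theorem sum_mul_iteratedDeriv_div_const {𝕜 𝕜' : Type*} [NontriviallyNormedField 𝕜]
    [NontriviallyNormedField 𝕜'] [NormedAlgebra 𝕜 𝕜'] (s : Finset ℕ) (d : ℕ → 𝕜')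
    (f : 𝕜 → 𝕜') (c : 𝕜') (x : 𝕜) :
    ∑ j ∈ s, d j * iteratedDeriv j (fun y => f y / c) x
      = (∑ j ∈ s, d j * iteratedDeriv j f x) / c := by
  simp only [iteratedDeriv_div_const, sum_div, mul_div_assoc]

theorem integral_mul_div_const {α 𝕜 : Type*} [MeasurableSpace α] {μ : Measure α} [RCLike 𝕜]
    (b f : α → 𝕜) (c : 𝕜) :
    ∫ z, b z * (f z / c) ∂μ = (∫ z, b z * f z ∂μ) / c := by
  simp only [← mul_div_assoc, integral_div]

theorem rank_one_riccati_nonlocal_FKPP_general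
    (T : ℝ) (N : ℕ) (d : ℕ → ℂ) (b : ℝ → ℂ)
    (p : ℝ → ℝ → ℂ)
    (hp_base : ∀ x : ℝ, ∀ t ∈ Set.Ico (0 : ℝ) T,
      HasDerivWithinAt (fun s : ℝ => p x s)
        (∑ j ∈ Finset.range (N + 1),
          d j * iteratedDeriv j (fun x' : ℝ => p x' t) x)
        (Set.Ico (0 : ℝ) T) t)
    (qbar : ℝ → ℂ)
    (hqbar_ne : ∀ t ∈ Set.Ico (0 : ℝ) T, qbar t ≠ 0)
    (hqbar_deriv : ∀ t ∈ Set.Ico (0 : ℝ) T,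
      HasDerivWithinAt qbar (∫ z : ℝ, b z * p z t) (Set.Ico (0 : ℝ) T) t) :
    (∀ x : ℝ, ∀ t ∈ Set.Ico (0 : ℝ) T,
      HasDerivWithinAt (fun s : ℝ => p x s / qbar s)
        ((∑ j ∈ Finset.range (N + 1),
            d j * iteratedDeriv j (fun x' : ℝ => p x' t / qbar t) x)
          - (p x t / qbar t) * ∫ z : ℝ, b z * (p z t / qbar t))
        (Set.Ico (0 : ℝ) T) t) ∧
    (qbar 0 = 1 → ∀ x : ℝ, p x 0 / qbar 0 = p x 0) := by
  refine ⟨fun x t ht => ?_, fun h0 x => by rw [h0, div_one]⟩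
  rw [sum_mul_iteratedDeriv_div_const, integral_mul_div_const]
  exact (hp_base x t ht).fun_div_sub_div_mul_div (hqbar_deriv t ht) (hqbar_ne t ht)

/-- **Rank-one Riccati verification: nonlocal FKPP-type equations.** Let `T > 0`,
`d(X) = Σ_{j=0}^N d_j X^j` a complex polynomial, and `b : ℝ → ℂ`. Suppose `p` is smooth
with `∂_t p = Σ_j d_j ∂_x^j p` on `ℝ × [0,T)` and `z ↦ b(z) p(z;t)` integrable for each
`t ∈ [0,T)`; and suppose `q̄ : [0,T) → ℂ` is differentiable, nonvanishing, with
`q̄'(t) = ∫ b(z) p(z;t) dz`. Then `g(x;t) := p(x;t)/q̄(t)` satisfies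
`∂_t g = Σ_j d_j ∂_x^j g − g(x;t) ∫ b(z) g(z;t) dz` on `ℝ × [0,T)`; and if `q̄(0) = 1`
then `g(·;0) = p(·;0)`. -/
theorem rank_one_riccati_nonlocal_FKPP
    (T : ℝ) (hT : 0 < T) (N : ℕ) (d : ℕ → ℂ) (b : ℝ → ℂ)
    (p : ℝ → ℝ → ℂ)
    (hp_smooth : ContDiff ℝ (⊤ : ℕ∞) (fun v : ℝ × ℝ => p v.1 v.2))
    (hp_base : ∀ x : ℝ, ∀ t ∈ Set.Ico (0 : ℝ) T,
      HasDerivWithinAt (fun s : ℝ => p x s)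
        (∑ j ∈ Finset.range (N + 1),
          d j * iteratedDeriv j (fun x' : ℝ => p x' t) x)
        (Set.Ico (0 : ℝ) T) t)
    (hp_int : ∀ t ∈ Set.Ico (0 : ℝ) T, Integrable (fun z : ℝ => b z * p z t))
    (qbar : ℝ → ℂ)
    (hqbar_ne : ∀ t ∈ Set.Ico (0 : ℝ) T, qbar t ≠ 0)
    (hqbar_deriv : ∀ t ∈ Set.Ico (0 : ℝ) T,
      HasDerivWithinAt qbar (∫ z : ℝ, b z * p z t) (Set.Ico (0 : ℝ) T) t) :
    (∀ x : ℝ, ∀ t ∈ Set.Ico (0 : ℝ) T,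
      HasDerivWithinAt (fun s : ℝ => p x s / qbar s)
        ((∑ j ∈ Finset.range (N + 1),
            d j * iteratedDeriv j (fun x' : ℝ => p x' t / qbar t) x)
          - (p x t / qbar t) * ∫ z : ℝ, b z * (p z t / qbar t))
        (Set.Ico (0 : ℝ) T) t) ∧
    (qbar 0 = 1 → ∀ x : ℝ, p x 0 / qbar 0 = p x 0) :=
  rank_one_riccati_nonlocal_FKPP_general T N d b p hp_base qbar hqbar_ne hqbar_deriv
end

section
/- (Second generalization: Riccati flow with a conserved quadratic constraint.) Let H be a complex Hilbert space and L(H) its bounded linear operators with adjoint †. Let T > 0 and let A₁, A₂, A₃, D₀, K ∈ L(H). Suppose P, Q : [0,T] → L(H) are differentiable in operator norm with ∂_t P(t) = D₀ P(t) and ∂_t Q(t) = (A₁ P(t) A₂ P(t)† A₃) Q(t) for all t ∈ [0,T], and suppose that for every t ∈ [0,T] the operator Q(t) is invertible and satisfies the constraint Q(t) A₂ Q(t)† = K. Define G(t) := P(t) Q(t)⁻¹. Then P(t) A₂ P(t)† = G(t) K G(t)† for all t, G is differentiable, and ∂_t G(t) = D₀ G(t) − G(t) A₁ G(t) K G(t)†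 A₃ for all t ∈ [0,T]. -/
/-!
The constraint recovers `A₂ = Q⁻¹ K (Q⁻¹)†`, so `P A₂ P† = G K G†`. Since `(Q⁻¹)' = -Q⁻¹ Q' Q⁻¹`,
any pair of linear flows `P' = D₀ P`, `Q' = M Q` makes `G = P Q⁻¹` satisfy `G' = D₀ G - G M`;
substituting the first identity into `M = A₁ P A₂ P† A₃` gives the quintic Riccati equation.
-/

open ContinuousLinearMap

theorem mul_mul_star_eq_of_mul_mul_star_eq {R : Type*} [Monoid R] [StarMul R] {q q' a k : R}
    (p : R) (hq : q' * q = 1) (h : q * (a * star q) = k) :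
    p * (a * star p) = (p * q') * (k * star (p * q')) := by
  rw [← h]
  calc p * (a * star p) = p * ((q' * q) * a * star (q' * q)) * star p := by
        rw [hq, star_one, one_mul, mul_one, mul_assoc]
    _ = _ := by simp only [star_mul, mul_assoc]

section Inverse

variable {𝕜 𝔸 : Type*} [NontriviallyNormedField 𝕜] [NormedRing 𝔸] [NormedAlgebra 𝕜 𝔸]
  [HasSummableGeomSeries 𝔸] {q qinv : 𝕜 → 𝔸} {q' : 𝔸} {s : Set 𝕜} {x : 𝕜}

theorem HasDerivWithinAt.inverse_of_mul_eq_one_s15 (hq : HasDerivWithinAt q q' s x)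
    (hleft : ∀ y ∈ s, qinv y * q y = 1) (hright : ∀ y ∈ s, q y * qinv y = 1) (hx : x ∈ s) :
    HasDerivWithinAt qinv (-(qinv x * q' * qinv x)) s x := by
  have hinv : ∀ y ∈ s, qinv y = Ring.inverse (q y) := fun y hy =>
    (Ring.inverse_unit ⟨q y, qinv y, hright y hy, hleft y hy⟩).symm
  have := (hasFDerivAt_ringInverse (𝕜 := 𝕜)
    ⟨q x, qinv x, hright x hx, hleft x hx⟩).comp_hasDerivWithinAt x hq
  simpa only [neg_apply, mulLeftRight_apply, Units.inv_mk] using this.congr hinv (hinv x hx)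

theorem HasDerivWithinAt.riccati_mul_inverse {p : 𝕜 → 𝔸} {d m : 𝔸}
    (hp : HasDerivWithinAt p (d * p x) s x) (hq : HasDerivWithinAt q (m * q x) s x)
    (hleft : ∀ y ∈ s, qinv y * q y = 1) (hright : ∀ y ∈ s, q y * qinv y = 1) (hx : x ∈ s) :
    HasDerivWithinAt (fun y => p y * qinv y) (d * (p x * qinv x) - p x * qinv x * m) s x := by
  convert hp.fun_mul (hq.inverse_of_mul_eq_one_s15 hleft hright hx) using 1
  simp only [mul_neg, mul_assoc, hright x hx, mul_one, sub_eq_add_neg]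

end Inverse

theorem riccati_flow_conserved_quadratic_constraint_general
    {H : Type*} [NormedAddCommGroup H] [InnerProductSpace ℂ H] [CompleteSpace H]
    (T : ℝ)
    (A₁ A₂ A₃ D₀ K : H →L[ℂ] H)
    (P Q Qinv : ℝ → H →L[ℂ] H)
    (hP : ∀ t ∈ Set.Icc (0 : ℝ) T,
      HasDerivWithinAt P (D₀ ∘L P t) (Set.Icc (0 : ℝ) T) t)
    (hQ : ∀ t ∈ Set.Icc (0 : ℝ) T,
      HasDerivWithinAt Q
        ((A₁ ∘L (P t ∘L (A₂ ∘L (adjoint (P t) ∘L A₃)))) ∘L Q t)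
        (Set.Icc (0 : ℝ) T) t)
    (hQinv_left : ∀ t ∈ Set.Icc (0 : ℝ) T, Qinv t ∘L Q t = 1)
    (hQinv_right : ∀ t ∈ Set.Icc (0 : ℝ) T, Q t ∘L Qinv t = 1)
    (hconstraint : ∀ t ∈ Set.Icc (0 : ℝ) T,
      Q t ∘L (A₂ ∘L adjoint (Q t)) = K) :
    (∀ t ∈ Set.Icc (0 : ℝ) T,
      P t ∘L (A₂ ∘L adjoint (P t))
        = (P t ∘L Qinv t) ∘L (K ∘L adjoint (P t ∘L Qinv t))) ∧
    ∀ t ∈ Set.Icc (0 : ℝ) T,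
      HasDerivWithinAt (fun s => P s ∘L Qinv s)
        (D₀ ∘L (P t ∘L Qinv t)
          - (P t ∘L Qinv t) ∘L
              (A₁ ∘L ((P t ∘L Qinv t) ∘L
                (K ∘L (adjoint (P t ∘L Qinv t) ∘L A₃)))))
        (Set.Icc (0 : ℝ) T) t := by
  simp only [← mul_def, ← star_eq_adjoint] at *
  have hquadratic : ∀ t ∈ Set.Icc (0 : ℝ) T,
      P t * (A₂ * star (P t)) = P t * Qinv t * (K * star (P t * Qinv t)) := fun t ht =>
    mul_mul_star_eq_of_mul_mul_star_eq (P t) (hQinv_left t ht) (hconstraint t ht)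
  refine ⟨hquadratic, fun t ht => ?_⟩
  refine ((hP t ht).riccati_mul_inverse (hQ t ht) hQinv_left hQinv_right ht).congr_deriv ?_
  have hquadratic_A₃ : P t * (A₂ * (star (P t) * A₃))
      = P t * Qinv t * (K * (star (P t * Qinv t) * A₃)) := by
    simpa only [mul_assoc] using congrArg (· * A₃) (hquadratic t ht)
  rw [hquadratic_A₃]

/-- **Second generalization: Riccati flow with a conserved quadratic constraint.**
Let `H` be a complex Hilbert space, `T > 0`, and `A₁, A₂, A₃, D₀, K ∈ L(H)`. Suppose
`P, Q : [0,T] → L(H)` are differentiable with `∂_t P = D₀ P` and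
`∂_t Q = (A₁ P A₂ P† A₃) Q`, each `Q(t)` is invertible (with inverse `Qinv t`) and
satisfies `Q(t) A₂ Q(t)† = K`. Set `G(t) := P(t) Q(t)⁻¹`. Then `P A₂ P† = G K G†`
on `[0,T]`, `G` is differentiable, and `∂_t G = D₀ G − G A₁ G K G† A₃` on `[0,T]`. -/
theorem riccati_flow_conserved_quadratic_constraint
    {H : Type*} [NormedAddCommGroup H] [InnerProductSpace ℂ H] [CompleteSpace H]
    (T : ℝ) (hT : 0 < T)
    (A₁ A₂ A₃ D₀ K : H →L[ℂ] H)
    (P Q Qinv : ℝ → H →L[ℂ] H)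
    (hP : ∀ t ∈ Set.Icc (0 : ℝ) T,
      HasDerivWithinAt P (D₀ ∘L P t) (Set.Icc (0 : ℝ) T) t)
    (hQ : ∀ t ∈ Set.Icc (0 : ℝ) T,
      HasDerivWithinAt Q
        ((A₁ ∘L (P t ∘L (A₂ ∘L (adjoint (P t) ∘L A₃)))) ∘L Q t)
        (Set.Icc (0 : ℝ) T) t)
    (hQinv_left : ∀ t ∈ Set.Icc (0 : ℝ) T, Qinv t ∘L Q t = 1)
    (hQinv_right : ∀ t ∈ Set.Icc (0 : ℝ) T, Q t ∘L Qinv t = 1)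
    (hconstraint : ∀ t ∈ Set.Icc (0 : ℝ) T,
      Q t ∘L (A₂ ∘L adjoint (Q t)) = K) :
    (∀ t ∈ Set.Icc (0 : ℝ) T,
      P t ∘L (A₂ ∘L adjoint (P t))
        = (P t ∘L Qinv t) ∘L (K ∘L adjoint (P t ∘L Qinv t))) ∧
    ∀ t ∈ Set.Icc (0 : ℝ) T,
      HasDerivWithinAt (fun s => P s ∘L Qinv s)
        (D₀ ∘L (P t ∘L Qinv t)
          - (P t ∘L Qinv t) ∘L
              (A₁ ∘L ((P t ∘L Qinv t) ∘L
                (K ∘L (adjoint (P t ∘L Qinv t) ∘L A₃)))))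
        (Set.Icc (0 : ℝ) T) t :=
  riccati_flow_conserved_quadratic_constraint_general T A₁ A₂ A₃ D₀ K P Q Qinv hP hQ hQinv_left
    hQinv_right hconstraint
end

section
/- (Fourier transform of star powers.) Let c : ℝ² → ℂ be a Schwartz function and define the mixed-sign Fourier transform (F f)(k,κ) := ∫_ℝ ∫_ℝ f(x,y) e^{2πi(kx − κy)} dx dy. Then for every integer m ≥ 1, the m-fold star power c^{⋆m} is continuous and integrable on ℝ², and (F(c^{⋆m}))(k,κ) = ((F c)^{⋆m})(k,κ) for all (k,κ) ∈ ℝ². Consequently, for any real coefficients α₁, …, α_M and f^⋆(c) := Σ_{m=1}^{M} α_m c^{⋆m}, one has F(f^⋆(c)) = f^⋆(F c). -/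
open MeasureTheory Finset

/-- The star product of two kernels on `ℝ²`: `(f ⋆ g)(x,y) := ∫ f(x,z) g(z,y) dz`. -/
noncomputable def starProd2 (f g : ℝ × ℝ → ℂ) : ℝ × ℝ → ℂ :=
  fun p => ∫ z : ℝ, f (p.1, z) * g (z, p.2)

/-- The `m`-fold star power for `m ≥ 1`: `c^{⋆1} = c`, `c^{⋆(m+1)} = c ⋆ c^{⋆m}`.
(The value at `m = 0` is a junk value, set to `c`.) -/
noncomputable def starPow2 (c : ℝ × ℝ → ℂ) : ℕ → ℝ × ℝ → ℂ
  | 0 => c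
  | 1 => c
  | n + 2 => starProd2 c (starPow2 c (n + 1))

/-- The mixed-sign Fourier transform on `ℝ²`:
`(F f)(k,κ) := ∫∫ f(x,y) e^{2πi(kx − κy)} dx dy`. -/
noncomputable def mixedFourier (f : ℝ × ℝ → ℂ) (k κ : ℝ) : ℂ :=
  ∫ x : ℝ, ∫ y : ℝ,
    f (x, y) * Complex.exp (2 * Real.pi * Complex.I * (k * x - κ * y))

/-!
Put `A(z) = ∫ c(x,z) 𝐞(kx) dx` and `B(z) = ∫ g(z,y) 𝐞(-κy) dy`. By Fubini,
`F(c ⋆ g)(k,κ) = ∫ A B`, while `F c(k,·) = 𝓕 A` and `F g(·,κ) = 𝓕⁻ B`; the multiplication formula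
`∫ f 𝓕h = ∫ 𝓕f h` together with Fourier inversion `B = 𝓕 (𝓕⁻ B)` turns `∫ A B` into
`∫ 𝓕A · 𝓕⁻B = (F c ⋆ F g)(k,κ)`. Every integral involved converges absolutely as soon as the
kernels are continuous and bounded by a multiple of `(1 + x²)⁻¹ (1 + y²)⁻¹`; this class contains
Schwartz functions and their Fourier transforms and is closed under `⋆`, so induction on `m`
gives the star powers, and linearity of `F` the finite sums.
-/

open MeasureTheory FourierTransform
open scoped RealInnerProductSpace SchwartzMap

noncomputable def decayWeight (x : ℝ) : ℝ := (1 + x ^ 2)⁻¹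

lemma decayWeight_pos (x : ℝ) : 0 < decayWeight x := by
  unfold decayWeight; positivity

lemma decayWeight_le_one (x : ℝ) : decayWeight x ≤ 1 :=
  inv_le_one_of_one_le₀ (by nlinarith [sq_nonneg x])

lemma integrable_decayWeight : Integrable decayWeight := integrable_inv_one_add_sq

lemma one_add_sq_mul_one_add_sq_le (p : ℝ × ℝ) :
    (1 + p.1 ^ 2) * (1 + p.2 ^ 2) ≤ (1 + ‖p‖) ^ 4 := by
  have h₁ : |p.1| ≤ ‖p‖ := norm_fst_le p
  have h₂ : |p.2| ≤ ‖p‖ := norm_snd_le p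
  have hn : 0 ≤ ‖p‖ := norm_nonneg p
  have e₁ : 1 + p.1 ^ 2 ≤ (1 + ‖p‖) ^ 2 := by nlinarith [abs_nonneg p.1, sq_abs p.1]
  have e₂ : 1 + p.2 ^ 2 ≤ (1 + ‖p‖) ^ 2 := by nlinarith [abs_nonneg p.2, sq_abs p.2]
  calc (1 + p.1 ^ 2) * (1 + p.2 ^ 2) ≤ (1 + ‖p‖) ^ 2 * (1 + ‖p‖) ^ 2 :=
        mul_le_mul e₁ e₂ (by positivity) (by positivity)
    _ = (1 + ‖p‖) ^ 4 := by ring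

lemma le_mul_decayWeight_of_decay {a C : ℝ} {p : ℝ × ℝ} (ha : 0 ≤ a)
    (h : (1 + ‖p‖) ^ 4 * a ≤ C) : a ≤ C * (decayWeight p.1 * decayWeight p.2) := by
  rw [decayWeight, decayWeight, ← mul_inv, le_mul_inv_iff₀ (by positivity)]
  nlinarith [one_add_sq_mul_one_add_sq_le p]

structure IsDecaying (f : ℝ → ℂ) : Prop where
  continuous : Continuous f
  bound : ∃ K, 0 ≤ K ∧ ∀ x, ‖f x‖ ≤ K * decayWeight x

structure IsDecayingKernel (g : ℝ × ℝ → ℂ) : Prop where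
  continuous : Continuous g
  bound : ∃ K, 0 ≤ K ∧ ∀ x y, ‖g (x, y)‖ ≤ K * (decayWeight x * decayWeight y)

lemma IsDecaying.integrable {f : ℝ → ℂ} (hf : IsDecaying f) : Integrable f := by
  obtain ⟨K, -, hK⟩ := hf.bound
  exact (integrable_decayWeight.const_mul K).mono' hf.continuous.aestronglyMeasurable
    (.of_forall hK)

lemma IsDecayingKernel.integrable {g : ℝ × ℝ → ℂ} (hg : IsDecayingKernel g) : Integrable g := by
  obtain ⟨K, -, hK⟩ := hg.bound
  have hw : Integrable fun p : ℝ × ℝ => K * (decayWeight p.1 * decayWeight p.2) := by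
    rw [Measure.volume_eq_prod]
    exact (integrable_decayWeight.mul_prod integrable_decayWeight).const_mul K
  exact hw.mono' hg.continuous.aestronglyMeasurable (.of_forall fun p => hK p.1 p.2)

lemma IsDecayingKernel.integral_integral_swap {F : ℝ × ℝ → ℂ} (hF : IsDecayingKernel F) :
    ∫ x, ∫ y, F (x, y) = ∫ y, ∫ x, F (x, y) :=
  MeasureTheory.integral_integral_swap (f := fun x y => F (x, y))
    (by rw [← Measure.volume_eq_prod]; exact hF.integrable)

lemma IsDecayingKernel.comp_swap {g : ℝ × ℝ → ℂ} (hg : IsDecayingKernel g) :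
    IsDecayingKernel fun p => g p.swap := by
  obtain ⟨K, hK0, hK⟩ := hg.bound
  exact ⟨hg.continuous.comp continuous_swap, K, hK0, fun x y => by
    simpa only [Prod.swap_prod_mk, mul_comm (decayWeight x)] using hK y x⟩

lemma IsDecayingKernel.isDecaying_left {g : ℝ × ℝ → ℂ} (hg : IsDecayingKernel g) (y : ℝ) :
    IsDecaying fun x => g (x, y) := by
  obtain ⟨K, hK0, hK⟩ := hg.bound
  refine ⟨hg.continuous.comp (by fun_prop), K * decayWeight y,
    mul_nonneg hK0 (decayWeight_pos y).le, fun x => ?_⟩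
  calc ‖g (x, y)‖ ≤ K * (decayWeight x * decayWeight y) := hK x y
    _ = K * decayWeight y * decayWeight x := by ring

lemma IsDecayingKernel.mul_of_norm_le_one {g φ : ℝ × ℝ → ℂ} (hg : IsDecayingKernel g)
    (hφ : Continuous φ) (hφ₁ : ∀ p, ‖φ p‖ ≤ 1) : IsDecayingKernel fun p => g p * φ p := by
  obtain ⟨K, hK0, hK⟩ := hg.bound
  refine ⟨hg.continuous.mul hφ, K, hK0, fun x y => ?_⟩
  rw [norm_mul]
  exact (mul_le_of_le_one_right (norm_nonneg _) (hφ₁ _)).trans (hK x y)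

lemma continuous_integral_of_le_decayWeight {X : Type*} [TopologicalSpace X]
    [FirstCountableTopology X] {H : X → ℝ → ℂ} (hH : Continuous (Function.uncurry H)) {K : ℝ}
    (hK : ∀ p z, ‖H p z‖ ≤ K * decayWeight z) : Continuous fun p => ∫ z, H p z :=
  continuous_of_dominated (fun p => (hH.comp (Continuous.prodMk_right p)).aestronglyMeasurable)
    (fun p => .of_forall (hK p)) (integrable_decayWeight.const_mul K)
    (.of_forall fun _ => hH.comp (continuous_id.prodMk continuous_const))

lemma norm_integral_le_of_le_decayWeight {f : ℝ → ℂ} {C : ℝ}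
    (h : ∀ z, ‖f z‖ ≤ C * decayWeight z) : ‖∫ z, f z‖ ≤ C * ∫ z, decayWeight z := by
  rw [← integral_const_mul]
  exact norm_integral_le_of_norm_le (integrable_decayWeight.const_mul C) (.of_forall h)

lemma IsDecayingKernel.isDecaying_integral_mul {g : ℝ × ℝ → ℂ} (hg : IsDecayingKernel g)
    {φ : ℝ → ℂ} (hφ : Continuous φ) (hφ₁ : ∀ t, ‖φ t‖ ≤ 1) :
    IsDecaying fun z => ∫ x, g (x, z) * φ x := by
  obtain ⟨K, hK0, hK⟩ := hg.bound
  have hbound : ∀ z x, ‖g (x, z) * φ x‖ ≤ K * decayWeight z * decayWeight x := fun z x => by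
    rw [norm_mul]
    calc ‖g (x, z)‖ * ‖φ x‖ ≤ K * (decayWeight x * decayWeight z) :=
          (mul_le_of_le_one_right (norm_nonneg _) (hφ₁ x)).trans (hK x z)
      _ = K * decayWeight z * decayWeight x := by ring
  refine ⟨?_, K * ∫ x, decayWeight x,
    mul_nonneg hK0 (integral_nonneg fun x => (decayWeight_pos x).le), fun z => ?_⟩
  · refine continuous_integral_of_le_decayWeight (K := K)
      ((hg.continuous.comp (by fun_prop)).mul (hφ.comp continuous_snd)) fun z x => ?_
    exact (hbound z x).trans (mul_le_mul_of_nonneg_right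
      (mul_le_of_le_one_right hK0 (decayWeight_le_one z)) (decayWeight_pos x).le)
  · calc ‖∫ x, g (x, z) * φ x‖ ≤ K * decayWeight z * ∫ x, decayWeight x :=
          norm_integral_le_of_le_decayWeight (hbound z)
      _ = (K * ∫ x, decayWeight x) * decayWeight z := by ring

lemma IsDecayingKernel.starProd2 {f g : ℝ × ℝ → ℂ} (hf : IsDecayingKernel f)
    (hg : IsDecayingKernel g) : IsDecayingKernel (starProd2 f g) := by
  obtain ⟨Kf, hKf0, hKf⟩ := hf.bound
  obtain ⟨Kg, hKg0, hKg⟩ := hg.bound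
  have hbound : ∀ x y z, ‖f (x, z) * g (z, y)‖
      ≤ Kf * Kg * (decayWeight x * decayWeight y) * decayWeight z := fun x y z => by
    have := decayWeight_pos x; have := decayWeight_pos y; have := decayWeight_pos z
    rw [norm_mul]
    calc ‖f (x, z)‖ * ‖g (z, y)‖
        ≤ Kf * (decayWeight x * decayWeight z) * (Kg * (decayWeight z * decayWeight y)) :=
          mul_le_mul (hKf x z) (hKg z y) (norm_nonneg _) (by positivity)
      _ = Kf * Kg * (decayWeight x * decayWeight y) * decayWeight z * decayWeight z := by ring
      _ ≤ Kf * Kg * (decayWeight x * decayWeight y) * decayWeight z :=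
          mul_le_of_le_one_right (by positivity) (decayWeight_le_one z)
  refine ⟨?_, Kf * Kg * ∫ z, decayWeight z,
    mul_nonneg (mul_nonneg hKf0 hKg0) (integral_nonneg fun z => (decayWeight_pos z).le),
    fun x y => ?_⟩
  · refine continuous_integral_of_le_decayWeight
      (H := fun (p : ℝ × ℝ) z => f (p.1, z) * g (z, p.2)) (K := Kf * Kg)
      ((hf.continuous.comp (by fun_prop)).mul (hg.continuous.comp (by fun_prop)))
      fun p z => (hbound p.1 p.2 z).trans ?_
    exact mul_le_mul_of_nonneg_right (mul_le_of_le_one_right (mul_nonneg hKf0 hKg0)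
      (mul_le_one₀ (decayWeight_le_one _) (decayWeight_pos _).le (decayWeight_le_one _)))
      (decayWeight_pos z).le
  · calc ‖∫ z, f (x, z) * g (z, y)‖
        ≤ Kf * Kg * (decayWeight x * decayWeight y) * ∫ z, decayWeight z :=
          norm_integral_le_of_le_decayWeight (hbound x y)
      _ = Kf * Kg * (∫ z, decayWeight z) * (decayWeight x * decayWeight y) := by ring

lemma IsDecayingKernel.starPow2 {c : ℝ × ℝ → ℂ} (hc : IsDecayingKernel c) :
    ∀ m, IsDecayingKernel (starPow2 c m)
  | 0 => hc
  | 1 => hc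
  | n + 2 => hc.starProd2 (hc.starPow2 (n + 1))

lemma integral_integral_mul_kernel_mul {u : ℝ → ℂ} (hu : IsDecaying u) {g : ℝ × ℝ → ℂ}
    (hg : IsDecayingKernel g) {φ : ℝ → ℂ} (hφ : Continuous φ) (hφ₁ : ∀ t, ‖φ t‖ ≤ 1) :
    ∫ y, (∫ z, u z * g (z, y)) * φ y = ∫ z, u z * ∫ y, g (z, y) * φ y := by
  obtain ⟨Ku, hKu0, hKu⟩ := hu.bound
  obtain ⟨Kg, hKg0, hKg⟩ := hg.bound
  have hkernel : IsDecayingKernel fun p : ℝ × ℝ => u p.2 * g p.swap := by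
    refine ⟨(hu.continuous.comp continuous_snd).mul (hg.continuous.comp continuous_swap),
      Ku * Kg, mul_nonneg hKu0 hKg0, fun y z => ?_⟩
    have := decayWeight_pos y; have := decayWeight_pos z
    rw [norm_mul]
    calc ‖u z‖ * ‖g (z, y)‖ ≤ Ku * decayWeight z * (Kg * (decayWeight z * decayWeight y)) :=
          mul_le_mul (hKu z) (hKg z y) (norm_nonneg _) (by positivity)
      _ = Ku * Kg * (decayWeight y * decayWeight z) * decayWeight z := by ring
      _ ≤ Ku * Kg * (decayWeight y * decayWeight z) :=
          mul_le_of_le_one_right (by positivity) (decayWeight_le_one z)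
  have hswap := (hkernel.mul_of_norm_le_one (hφ.comp continuous_fst) fun p => hφ₁ p.1)
    |>.integral_integral_swap
  calc ∫ y, (∫ z, u z * g (z, y)) * φ y = ∫ y, ∫ z, u z * g (z, y) * φ y := by
        simp_rw [integral_mul_const]
    _ = ∫ z, ∫ y, u z * g (z, y) * φ y := hswap
    _ = ∫ z, u z * ∫ y, g (z, y) * φ y := by simp_rw [mul_assoc, integral_const_mul]

lemma fourierChar_sub (a b : ℝ) : (𝐞 (a - b) : ℂ) = 𝐞 a * 𝐞 (-b) := by
  rw [sub_eq_add_neg, AddChar.map_add_eq_mul, Circle.coe_mul]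

lemma mixedFourier_eq_fourierChar (f : ℝ × ℝ → ℂ) (k κ : ℝ) :
    mixedFourier f k κ = ∫ x, ∫ y, f (x, y) * 𝐞 (k * x - κ * y) := by
  simp_rw [mixedFourier, Real.fourierChar_apply]
  push_cast
  ring_nf

lemma mixedFourier_starProd2_eq_integral {c g : ℝ × ℝ → ℂ} (hc : IsDecayingKernel c)
    (hg : IsDecayingKernel g) (k κ : ℝ) :
    mixedFourier (starProd2 c g) k κ =
      ∫ z, (∫ x, c (x, z) * 𝐞 (k * x)) * ∫ y, g (z, y) * 𝐞 (-(κ * y)) := by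
  have hφ₁ : ∀ t, ‖(𝐞 t : ℂ)‖ ≤ 1 := fun t => (Circle.norm_coe _).le
  have hB : IsDecaying fun z => ∫ y, g (z, y) * 𝐞 (-(κ * y)) :=
    hg.comp_swap.isDecaying_integral_mul (by fun_prop) fun _ => hφ₁ _
  calc mixedFourier (starProd2 c g) k κ
      = ∫ x, (∫ y, (∫ z, c (x, z) * g (z, y)) * 𝐞 (-(κ * y))) * 𝐞 (k * x) := by
        rw [mixedFourier_eq_fourierChar]
        congr 1; ext x
        rw [← integral_mul_const]
        congr 1; ext y
        rw [fourierChar_sub, starProd2]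
        ring
    _ = ∫ x, (∫ z, c (x, z) * ∫ y, g (z, y) * 𝐞 (-(κ * y))) * 𝐞 (k * x) := by
        congr 1; ext x
        congr 1
        exact integral_integral_mul_kernel_mul (φ := fun y => (𝐞 (-(κ * y)) : ℂ))
          (hc.comp_swap.isDecaying_left x) hg (by fun_prop) fun _ => hφ₁ _
    _ = ∫ x, (∫ z, (∫ y, g (z, y) * 𝐞 (-(κ * y))) * c (x, z)) * 𝐞 (k * x) := by
        simp_rw [mul_comm (c _)]
    _ = ∫ z, (∫ y, g (z, y) * 𝐞 (-(κ * y))) * ∫ x, c (x, z) * 𝐞 (k * x) :=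
        integral_integral_mul_kernel_mul (φ := fun x => (𝐞 (k * x) : ℂ)) hB hc.comp_swap
          (by fun_prop) fun _ => hφ₁ _
    _ = ∫ z, (∫ x, c (x, z) * 𝐞 (k * x)) * ∫ y, g (z, y) * 𝐞 (-(κ * y)) := by
        simp_rw [mul_comm (∫ y, g _ * _)]

lemma mixedFourier_eq_fourier_integral_left {c : ℝ × ℝ → ℂ} (hc : IsDecayingKernel c)
    (k s : ℝ) : mixedFourier c k s = 𝓕 (fun z => ∫ x, c (x, z) * 𝐞 (k * x)) s := by
  have hF : IsDecayingKernel fun p => c p * 𝐞 (k * p.1 - s * p.2) :=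
    hc.mul_of_norm_le_one (by fun_prop) fun _ => (Circle.norm_coe _).le
  rw [mixedFourier_eq_fourierChar, hF.integral_integral_swap, Real.fourier_real_eq]
  congr 1; ext y
  rw [Circle.smul_def, smul_eq_mul, ← integral_const_mul]
  congr 1; ext x
  rw [fourierChar_sub, mul_comm y s]
  ring

lemma mixedFourier_eq_fourierInv_integral_right (g : ℝ × ℝ → ℂ) (s κ : ℝ) :
    mixedFourier g s κ = 𝓕⁻ (fun z => ∫ y, g (z, y) * 𝐞 (-(κ * y))) s := by
  rw [mixedFourier_eq_fourierChar, Real.fourierInv_eq]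
  congr 1; ext z
  rw [Circle.smul_def, smul_eq_mul, ← integral_const_mul, Real.inner_apply]
  congr 1; ext y
  rw [fourierChar_sub, mul_comm z s]
  ring

lemma integral_mul_eq_integral_fourier_mul_fourierInv {V : Type*} [NormedAddCommGroup V]
    [InnerProductSpace ℝ V] [FiniteDimensional ℝ V] [MeasurableSpace V] [BorelSpace V]
    {f g : V → ℂ} (hf : Integrable f) (hg : Continuous g) (hg₁ : Integrable g)
    (hg₂ : Integrable (𝓕⁻ g)) : ∫ x, f x * g x = ∫ ξ, 𝓕 f ξ * 𝓕⁻ g ξ := by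
  have hFg : Integrable (𝓕 g) := by
    simpa only [Real.fourierInv_eq_fourier_neg, neg_neg] using hg₂.comp_neg
  have hflip : (innerₗ V).flip = innerₗ V := LinearMap.ext₂ fun x y => real_inner_comm x y
  have hmul := VectorFourier.integral_fourierIntegral_smul_eq_flip (L := innerₗ V)
    Real.continuous_fourierChar continuous_inner hf hg₂
  rw [hflip] at hmul
  calc ∫ x, f x * g x = ∫ x, f x * 𝓕 (𝓕⁻ g) x := by rw [hg.fourier_fourierInv_eq hg₁ hFg]
    _ = ∫ ξ, 𝓕 f ξ * 𝓕⁻ g ξ := hmul.symm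

theorem mixedFourier_starProd2 {c g : ℝ × ℝ → ℂ} (hc : IsDecayingKernel c)
    (hg : IsDecayingKernel g) (hFg : IsDecayingKernel fun p => mixedFourier g p.1 p.2)
    (k κ : ℝ) :
    mixedFourier (starProd2 c g) k κ =
      starProd2 (fun p => mixedFourier c p.1 p.2) (fun p => mixedFourier g p.1 p.2) (k, κ) := by
  have hA : IsDecaying fun z => ∫ x, c (x, z) * 𝐞 (k * x) :=
    hc.isDecaying_integral_mul (by fun_prop) fun _ => (Circle.norm_coe _).le
  have hB : IsDecaying fun z => ∫ y, g (z, y) * 𝐞 (-(κ * y)) :=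
    hg.comp_swap.isDecaying_integral_mul (by fun_prop) fun _ => (Circle.norm_coe _).le
  have hFinvB : 𝓕⁻ (fun z => ∫ y, g (z, y) * 𝐞 (-(κ * y))) = fun s => mixedFourier g s κ :=
    funext fun s => (mixedFourier_eq_fourierInv_integral_right g s κ).symm
  rw [mixedFourier_starProd2_eq_integral hc hg, integral_mul_eq_integral_fourier_mul_fourierInv
    hA.integrable hB.continuous hB.integrable (hFinvB ▸ (hFg.isDecaying_left κ).integrable),
    hFinvB]
  simp only [starProd2, mixedFourier_eq_fourier_integral_left hc]

theorem mixedFourier_starPow2 {c : ℝ × ℝ → ℂ} (hc : IsDecayingKernel c)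
    (hFc : IsDecayingKernel fun p => mixedFourier c p.1 p.2) :
    ∀ m, (fun p : ℝ × ℝ => mixedFourier (starPow2 c m) p.1 p.2) =
      starPow2 (fun p => mixedFourier c p.1 p.2) m
  | 0 => rfl
  | 1 => rfl
  | n + 2 => by
    have ih := mixedFourier_starPow2 hc hFc (n + 1)
    funext p
    rw [starPow2, starPow2, mixedFourier_starProd2 hc (hc.starPow2 _) (ih ▸ hFc.starPow2 _), ih]

lemma integrable_mul_fourierChar {f : ℝ × ℝ → ℂ} (hf : Integrable f) (k κ : ℝ) :
    Integrable fun p : ℝ × ℝ => f p * 𝐞 (k * p.1 - κ * p.2) :=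
  hf.mul_bdd
    (by fun_prop : Continuous fun p : ℝ × ℝ => (𝐞 (k * p.1 - κ * p.2) : ℂ)).aestronglyMeasurable
    (.of_forall fun _ => (Circle.norm_coe _).le)

lemma mixedFourier_eq_integral_prod {f : ℝ × ℝ → ℂ} (hf : Integrable f) (k κ : ℝ) :
    mixedFourier f k κ = ∫ p, f p * 𝐞 (k * p.1 - κ * p.2) := by
  rw [mixedFourier_eq_fourierChar, Measure.volume_eq_prod,
    integral_prod _ (Measure.volume_eq_prod ℝ ℝ ▸ integrable_mul_fourierChar hf k κ)]

lemma mixedFourier_sum {ι : Type*} (s : Finset ι) {f : ι → ℝ × ℝ → ℂ}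
    (hf : ∀ i ∈ s, Integrable (f i)) (k κ : ℝ) :
    mixedFourier (fun p => ∑ i ∈ s, f i p) k κ = ∑ i ∈ s, mixedFourier (f i) k κ := by
  rw [mixedFourier_eq_integral_prod (integrable_finsetSum s hf)]
  simp_rw [Finset.sum_mul]
  rw [integral_finsetSum s fun i hi => integrable_mul_fourierChar (hf i hi) k κ]
  exact Finset.sum_congr rfl fun i hi => (mixedFourier_eq_integral_prod (hf i hi) k κ).symm

lemma mixedFourier_const_mul (a : ℂ) (f : ℝ × ℝ → ℂ) (k κ : ℝ) :
    mixedFourier (fun p => a * f p) k κ = a * mixedFourier f k κ := by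
  simp_rw [mixedFourier, mul_assoc, integral_const_mul]

lemma isDecayingKernel_schwartzMap_comp {E : Type*} [NormedAddCommGroup E] [NormedSpace ℝ E]
    (f : 𝓢(E, ℂ)) {L : ℝ × ℝ → E} (hL : Continuous L) (hLn : ∀ p, ‖p‖ ≤ ‖L p‖) :
    IsDecayingKernel fun p => f (L p) := by
  refine ⟨f.continuous.comp hL,
    2 ^ 4 * (Finset.Iic (4, 0)).sup (fun m => SchwartzMap.seminorm ℝ m.1 m.2) f,
    by positivity, fun x y => le_mul_decayWeight_of_decay (p := (x, y)) (norm_nonneg _) ?_⟩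
  have hdecay := f.one_add_le_sup_seminorm_apply (𝕜 := ℝ) (m := (4, 0)) le_rfl le_rfl (L (x, y))
  rw [norm_iteratedFDeriv_zero] at hdecay
  refine le_trans (mul_le_mul_of_nonneg_right ?_ (norm_nonneg _)) hdecay
  exact pow_le_pow_left₀ (by positivity) (by linarith [hLn (x, y)]) 4

/-- `ℂ` is the Euclidean model of `ℝ²` here: `ℝ × ℝ` carries the sup norm, not an inner product. -/
lemma mixedFourier_eq_fourier_complex {f : ℝ × ℝ → ℂ} (hf : Integrable f) (k κ : ℝ) :
    mixedFourier f k κ = 𝓕 (fun z : ℂ => f (z.re, z.im)) ⟨-k, κ⟩ := by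
  rw [mixedFourier_eq_integral_prod hf, Real.fourier_eq,
    ← Complex.volume_preserving_equiv_real_prod.integral_comp']
  congr 1; ext z
  have harg : k * z.re - κ * z.im = -⟪z, ⟨-k, κ⟩⟫ := by simp [Complex.inner]; ring
  rw [Circle.smul_def, smul_eq_mul, ← harg, mul_comm]
  rfl

lemma isDecayingKernel_mixedFourier_schwartzMap (c : 𝓢(ℝ × ℝ, ℂ)) :
    IsDecayingKernel fun p => mixedFourier (fun q => c q) p.1 p.2 := by
  let c' : 𝓢(ℂ, ℂ) := SchwartzMap.compCLMOfContinuousLinearEquiv ℝ Complex.equivRealProdCLM c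
  have hc' : (fun p : ℝ × ℝ => mixedFourier (fun q => c q) p.1 p.2) =
      fun p => 𝓕 c' ⟨-p.1, p.2⟩ :=
    funext fun p => mixedFourier_eq_fourier_complex c.integrable p.1 p.2
  have hL : Continuous fun p : ℝ × ℝ => (⟨-p.1, p.2⟩ : ℂ) :=
    Complex.equivRealProdCLM.symm.continuous.comp
      (by fun_prop : Continuous fun p : ℝ × ℝ => (-p.1, p.2))
  rw [hc']
  refine isDecayingKernel_schwartzMap_comp _ hL fun p => ?_
  rw [Prod.norm_def, Real.norm_eq_abs, Real.norm_eq_abs, ← abs_neg p.1]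
  exact max_le (Complex.abs_re_le_norm ⟨-p.1, p.2⟩) (Complex.abs_im_le_norm ⟨-p.1, p.2⟩)

/-- **Fourier transform of star powers.** For a Schwartz function `c` on `ℝ²` and every
`m ≥ 1`, the `m`-fold star power `c^{⋆m}` is continuous and integrable on `ℝ²` and
`F(c^{⋆m}) = (F c)^{⋆m}`. Consequently, for real coefficients `α₁, …, α_M` and
`f^⋆(c) := Σ_{m=1}^{M} α_m c^{⋆m}`, one has `F(f^⋆(c)) = f^⋆(F c)`. -/
theorem mixedFourier_star_powers (c : SchwartzMap (ℝ × ℝ) ℂ) :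
    (∀ m : ℕ, 1 ≤ m →
      Continuous (starPow2 (fun p : ℝ × ℝ => c p) m) ∧
      Integrable (starPow2 (fun p : ℝ × ℝ => c p) m) (volume : Measure (ℝ × ℝ)) ∧
      ∀ k κ : ℝ,
        mixedFourier (starPow2 (fun p : ℝ × ℝ => c p) m) k κ
          = starPow2 (fun p : ℝ × ℝ => mixedFourier (fun q : ℝ × ℝ => c q) p.1 p.2)
              m (k, κ)) ∧
    ∀ (M : ℕ) (α : ℕ → ℝ), ∀ k κ : ℝ,
      mixedFourier
        (fun p : ℝ × ℝ =>
          ∑ m ∈ Finset.Icc 1 M, (α m : ℂ) * starPow2 (fun q : ℝ × ℝ => c q) m p)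
        k κ
        = ∑ m ∈ Finset.Icc 1 M,
            (α m : ℂ)
              * starPow2
                  (fun p : ℝ × ℝ => mixedFourier (fun q : ℝ × ℝ => c q) p.1 p.2)
                  m (k, κ) := by
  have hc : IsDecayingKernel fun p : ℝ × ℝ => c p :=
    isDecayingKernel_schwartzMap_comp c continuous_id fun _ => le_rfl
  have hpow := mixedFourier_starPow2 hc (isDecayingKernel_mixedFourier_schwartzMap c)
  refine ⟨fun m _ => ⟨(hc.starPow2 m).continuous, (hc.starPow2 m).integrable,
    fun k κ => congrFun (hpow m) (k, κ)⟩, fun M α k κ => ?_⟩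
  rw [mixedFourier_sum _ fun m _ => (hc.starPow2 m).integrable.const_mul _]
  refine Finset.sum_congr rfl fun m _ => ?_
  rw [mixedFourier_const_mul, ← congrFun (hpow m) (k, κ)]
end
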